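/- Let λ, μ > 0 with ρ = λ/μ < 1, and let i ≥ 0 be an integer. Then the function t ↦ p_{i0}(t) defined by the explicit integral formula is differentiable on (0, ∞) and satisfies the boundary Kolmogorov forward equation d/dt p_{i0}(t) = μ·p_{i1}(t) − λ·p_{i0}(t) for all t > 0, where p_{ij}(t) = (2/π)·ρ^{(j−i)/2}·∫₀^π e^{−μ t γ(y)}/γ(y) · a_i(y)·a_j(y) dy + (1−ρ)·ρ^j. -/

import Mathlib

open Real MeasureTheory Set Filter

/-- γ(y) = 1 + ρ − 2√ρ·cos(y). -/
noncomputable def gam (ρ y : ℝ) : ℝ := 1 + ρ - 2 * Real.sqrt ρ * Real.cos y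

/-- a_k(y) = sin(k·y) − √ρ·sin((k+1)·y). -/
noncomputable def aco (ρ : ℝ) (k : ℕ) (y : ℝ) : ℝ :=
  Real.sin ((k : ℝ) * y) - Real.sqrt ρ * Real.sin (((k : ℝ) + 1) * y)

/-- Transient expected queue length of an M/M/1 queue started with `i` customers. -/
noncomputable def EL (lam mu : ℝ) (i : ℕ) (t : ℝ) : ℝ :=
  (2 / Real.pi) * (lam / mu) ^ ((1 - (i : ℝ)) / 2) *
    (∫ y in (0 : ℝ)..Real.pi,
      Real.exp (-(mu * t * gam (lam / mu) y)) / (gam (lam / mu) y) ^ 2 *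
        (aco (lam / mu) i y * Real.sin y)) +
  (lam / mu) / (1 - lam / mu)

/-- Transient probability that an M/M/1 queue started with `i` customers has `j` at time `t`. -/
noncomputable def pq (lam mu : ℝ) (i j : ℕ) (t : ℝ) : ℝ :=
  (2 / Real.pi) * (lam / mu) ^ (((j : ℝ) - (i : ℝ)) / 2) *
    (∫ y in (0 : ℝ)..Real.pi,
      Real.exp (-(mu * t * gam (lam / mu) y)) / gam (lam / mu) y *
        (aco (lam / mu) i y * aco (lam / mu) j y)) +
  (1 - lam / mu) * (lam / mu) ^ j

/-- Erlang(n) density with rate `mu`: f_n(t) = μⁿ t^{n−1} e^{−μt}/(n−1)!. -/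
noncomputable def erl (mu : ℝ) (n : ℕ) (t : ℝ) : ℝ :=
  mu ^ n * t ^ (n - 1) * Real.exp (-(mu * t)) / (Nat.factorial (n - 1) : ℝ)

/-- Expected total time to complete queue with `a` customers first, then queue with `b`. -/
noncomputable def ETT (lam mu : ℝ) (a b : ℕ) : ℝ :=
  ((a : ℝ) + 2) / mu + (1 / mu) * ∫ t in Set.Ioi (0 : ℝ), erl mu (a + 1) t * EL lam mu b t

/-!
Differentiating under the integral sign, the factor `1/γ` cancels and `d/dt p_{i0}` is
`(2/π) ρ^{-i/2} ∫ -μ e^{-μtγ} a_i a_0`. On the other side, `λ = μρ` and the exponent shift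
`ρ^{(1-i)/2} = √ρ ρ^{-i/2}` reduce `μ p_{i1} - λ p_{i0}` to the integral of
`μ e^{-μtγ}/γ · a_i (√ρ a_1 - ρ a_0)`, while the stationary parts `μ(1-ρ)ρ` and `λ(1-ρ)` cancel.
The trigonometric identity `√ρ a_1 - ρ a_0 = -γ a_0` makes the two integrands equal.
-/

lemma continuous_gam (ρ : ℝ) : Continuous (gam ρ) := by unfold gam; fun_prop

lemma continuous_aco (ρ : ℝ) (k : ℕ) : Continuous (aco ρ k) := by unfold aco; fun_prop

lemma gam_pos {ρ : ℝ} (h0 : 0 ≤ ρ) (h1 : ρ < 1) (y : ℝ) : 0 < gam ρ y := by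
  have hsq : √ρ < 1 := Real.sqrt_lt' one_pos |>.2 (by simpa using h1)
  have hform : gam ρ y = (1 - √ρ) ^ 2 + 2 * √ρ * (1 - cos y) := by
    rw [gam]; linear_combination (Real.sq_sqrt h0).symm
  rw [hform]
  have := mul_nonneg (Real.sqrt_nonneg ρ) (sub_nonneg.2 (cos_le_one y))
  nlinarith [sq_pos_of_pos (sub_pos.2 hsq)]

lemma sqrt_mul_aco_one_sub_mul_aco_zero (ρ y : ℝ) :
    √ρ * aco ρ 1 y - ρ * aco ρ 0 y = -(gam ρ y * aco ρ 0 y) := by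
  simp only [aco, gam, Nat.cast_zero, Nat.cast_one, zero_mul, zero_add, one_mul, sin_zero,
    show (1 + 1 : ℝ) * y = 2 * y by ring, sin_two_mul]
  ring

theorem intervalIntegral.hasDerivAt_integral_of_continuous_deriv {E : Type*}
    [NormedAddCommGroup E] [NormedSpace ℝ E] {μ : Measure ℝ} [IsLocallyFiniteMeasure μ]
    {F F' : ℝ → ℝ → E} {a b : ℝ} (hF : ∀ x, Continuous (F x))
    (hF' : Continuous (Function.uncurry F')) (hderiv : ∀ x y, HasDerivAt (F · y) (F' x y) x)
    (t : ℝ) :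
    HasDerivAt (fun x => ∫ y in a..b, F x y ∂μ) (∫ y in a..b, F' t y ∂μ) t := by
  obtain ⟨C, hC⟩ := ((isCompact_closedBall t 1).prod
    (isCompact_uIcc (a := a) (b := b))).exists_bound_of_continuousOn hF'.continuousOn
  refine (intervalIntegral.hasDerivAt_integral_of_dominated_loc_of_deriv_le
    (bound := fun _ => C) (Metric.ball_mem_nhds t one_pos)
    (Eventually.of_forall fun x => (hF x).aestronglyMeasurable) ((hF t).intervalIntegrable a b)
    (hF'.comp (Continuous.prodMk_right t)).aestronglyMeasurable ?_ intervalIntegrable_const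
    (Eventually.of_forall fun y _ x _ => hderiv x y)).2
  exact Eventually.of_forall fun y hy x hx =>
    hC (x, y) ⟨Metric.ball_subset_closedBall hx, uIoc_subset_uIcc hy⟩

lemma hasDerivAt_exp_neg_mul_div {c g : ℝ} (hg : g ≠ 0) (k x : ℝ) :
    HasDerivAt (fun s => exp (-(c * s * g)) / g * k) (-c * exp (-(c * x * g)) * k) x := by
  have hlin : HasDerivAt (fun s => -(c * s * g)) (-(c * g)) x := by
    simpa using (((hasDerivAt_id x).const_mul c).mul_const g).fun_neg
  exact ((hlin.exp.div_const g).mul_const k).congr_deriv (by field_simp)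

lemma hasDerivAt_pq {lam mu : ℝ} (hρ0 : 0 ≤ lam / mu) (hρ1 : lam / mu < 1) (i j : ℕ) (t : ℝ) :
    HasDerivAt (pq lam mu i j)
      ((2 / π) * (lam / mu) ^ (((j : ℝ) - (i : ℝ)) / 2) *
        ∫ y in (0 : ℝ)..π,
          -mu * exp (-(mu * t * gam (lam / mu) y)) * (aco (lam / mu) i y * aco (lam / mu) j y))
      t := by
  have hγ : ∀ y, gam (lam / mu) y ≠ 0 := fun y => (gam_pos hρ0 hρ1 y).ne'
  have hγc := continuous_gam (lam / mu)
  have hac := (continuous_aco (lam / mu) i).mul (continuous_aco (lam / mu) j)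
  refine ((intervalIntegral.hasDerivAt_integral_of_continuous_deriv (fun x => ?_) ?_
    (fun x y => hasDerivAt_exp_neg_mul_div (hγ y) _ x) t).const_mul _).add_const _
  · exact ((continuous_exp.comp (continuous_const.mul hγc).neg).div hγc hγ).mul hac
  · exact (continuous_const.mul (continuous_exp.comp
      ((continuous_const.mul continuous_fst).mul (hγc.comp continuous_snd)).neg)).mul
      (hac.comp continuous_snd)

lemma mu_mul_pq_one_sub_lam_mul_pq_zero {lam mu : ℝ} (hlam : 0 < lam) (hmu : 0 < mu)
    (hρ : lam / mu < 1) (i : ℕ) (t : ℝ) :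
    mu * pq lam mu i 1 t - lam * pq lam mu i 0 t =
      (2 / π) * (lam / mu) ^ ((((0 : ℕ) : ℝ) - (i : ℝ)) / 2) *
        ∫ y in (0 : ℝ)..π,
          -mu * exp (-(mu * t * gam (lam / mu) y)) *
            (aco (lam / mu) i y * aco (lam / mu) 0 y) := by
  simp only [pq]
  set ρ := lam / mu with hρ_def
  have hρ0 : 0 < ρ := by positivity
  have hlam_eq : lam = mu * ρ := by rw [hρ_def]; field_simp
  clear_value ρ
  have hγ : ∀ y, gam ρ y ≠ 0 := fun y => (gam_pos hρ0.le hρ y).ne'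
  have hpow : ρ ^ ((((1 : ℕ) : ℝ) - i) / 2) = √ρ * ρ ^ ((((0 : ℕ) : ℝ) - i) / 2) := by
    rw [Real.sqrt_eq_rpow, ← Real.rpow_add hρ0]; congr 1; push_cast; ring
  have hint : ∀ j, IntervalIntegrable
      (fun y => exp (-(mu * t * gam ρ y)) / gam ρ y * (aco ρ i y * aco ρ j y)) volume 0 π :=
    fun j => Continuous.intervalIntegrable (((continuous_exp.comp
      (continuous_const.mul (continuous_gam ρ)).neg).div (continuous_gam ρ) hγ).mul
        ((continuous_aco ρ i).mul (continuous_aco ρ j))) 0 π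
  have hI :
      mu * √ρ * (∫ y in (0 : ℝ)..π, exp (-(mu * t * gam ρ y)) / gam ρ y * (aco ρ i y * aco ρ 1 y))
        - mu * ρ * ∫ y in (0 : ℝ)..π, exp (-(mu * t * gam ρ y)) / gam ρ y * (aco ρ i y * aco ρ 0 y)
      = ∫ y in (0 : ℝ)..π, -mu * exp (-(mu * t * gam ρ y)) * (aco ρ i y * aco ρ 0 y) := by
    rw [← intervalIntegral.integral_const_mul, ← intervalIntegral.integral_const_mul,
      ← intervalIntegral.integral_sub ((hint 1).const_mul _) ((hint 0).const_mul _)]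
    refine intervalIntegral.integral_congr fun y _ => ?_
    calc _ = mu * exp (-(mu * t * gam ρ y)) / gam ρ y * aco ρ i y *
          (√ρ * aco ρ 1 y - ρ * aco ρ 0 y) := by ring
      _ = _ := by rw [sqrt_mul_aco_one_sub_mul_aco_zero]; field_simp [hγ y]
  rw [hpow, hlam_eq, ← hI]
  ring

/-- Boundary Kolmogorov forward equation: d/dt p_{i0}(t) = μ·p_{i1}(t) − λ·p_{i0}(t) on (0,∞). -/
theorem pq_kolmogorov_forward_boundary (lam mu : ℝ) (hlam : 0 < lam) (hmu : 0 < mu)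
    (hρ : lam / mu < 1) (i : ℕ) :
    ∀ t : ℝ, 0 < t →
      HasDerivAt (fun s : ℝ => pq lam mu i 0 s)
        (mu * pq lam mu i 1 t - lam * pq lam mu i 0 t) t := by
  intro t _
  rw [mu_mul_pq_one_sub_lam_mul_pq_zero hlam hmu hρ]
  exact hasDerivAt_pq (by positivity) hρ i 0 t
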